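/- Let the objective sequence s_t = Σᵢ wᵢ log(1 + μᵢ^{(t)}) be generated by an iterative scheme in which, at each iteration t, π_i^{(t)} = 1/√(1+μ_i^{(t)}) and the new iterate satisfies Σᵢ wᵢ √(1+μᵢ^{(t)}) · πᵢ^{(t+1)} ≤ Σᵢ wᵢ √(1+μᵢ^{(t)}) · πᵢ^{(t)} with πᵢ^{(t+1)} = 1/√(1+μᵢ^{(t+1)}), where wᵢ > 0 and μᵢ^{(t)} ≥ 0 for all i, t. If additionally s_t is bounded above by some finite constant, then s_t is monotonically nondecreasing and converges. -/
import Mathlib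

open Real in
lemma tangent_bound {x y : ℝ} (hx : 0 < x) (hy : 0 < y) :
    Real.log x + 2 - 2 * Real.sqrt (x / y) ≤ Real.log y := by
  have hr : 0 < Real.sqrt (x / y) := Real.sqrt_pos.2 (div_pos hx hy)
  have hlog := Real.log_le_sub_one_of_pos hr
  have hsq : Real.log (Real.sqrt (x / y)) = (Real.log x - Real.log y) / 2 := by
    rw [Real.log_sqrt (le_of_lt (div_pos hx hy)), Real.log_div hx.ne' hy.ne']
  rw [hsq] at hlog
  linarith

open Filter in
theorem stmt_11 (N : ℕ) (w : Fin N → ℝ) (hw : ∀ i, 0 < w i)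
    (μ : ℕ → Fin N → ℝ) (hμ : ∀ t i, 0 ≤ μ t i)
    (hstep : ∀ t, (∑ i, w i * Real.sqrt (1 + μ t i) * (1 / Real.sqrt (1 + μ (t + 1) i)))
      ≤ ∑ i, w i * Real.sqrt (1 + μ t i) * (1 / Real.sqrt (1 + μ t i)))
    (C : ℝ) (hC : ∀ t, (∑ i, w i * Real.log (1 + μ t i)) ≤ C) :
    Monotone (fun t => ∑ i, w i * Real.log (1 + μ t i)) ∧
    ∃ l : ℝ, Tendsto (fun t => ∑ i, w i * Real.log (1 + μ t i)) atTop (nhds l) := by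
  have hpos : ∀ t i, (0:ℝ) < 1 + μ t i := fun t i => by have := hμ t i; linarith
  have hmono : Monotone (fun t => ∑ i, w i * Real.log (1 + μ t i)) := by
    apply monotone_nat_of_le_succ
    intro t
    have key : ∀ i : Fin N,
        w i * Real.log (1 + μ t i) + 2 * w i
          - 2 * (w i * Real.sqrt (1 + μ t i) * (1 / Real.sqrt (1 + μ (t+1) i)))
        ≤ w i * Real.log (1 + μ (t+1) i) := by
      intro i
      have h1 := hpos t i
      have h2 := hpos (t+1) i
      have hb := tangent_bound h1 h2
      have hdiv : Real.sqrt ((1 + μ t i) / (1 + μ (t+1) i))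
          = Real.sqrt (1 + μ t i) * (1 / Real.sqrt (1 + μ (t+1) i)) := by
        rw [Real.sqrt_div h1.le, mul_one_div]
      rw [hdiv] at hb
      nlinarith [hw i, mul_le_mul_of_nonneg_left hb (hw i).le]
    have hsum := Finset.sum_le_sum (s := Finset.univ) (fun i _ => key i)
    rw [Finset.sum_sub_distrib, Finset.sum_add_distrib, ← Finset.mul_sum, ← Finset.mul_sum] at hsum
    have heq : ∀ i : Fin N, w i * Real.sqrt (1 + μ t i) * (1 / Real.sqrt (1 + μ t i)) = w i := by
      intro i
      have h1 : Real.sqrt (1 + μ t i) ≠ 0 := ne_of_gt (Real.sqrt_pos.2 (hpos t i))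
      field_simp
    have hstep' := hstep t
    simp only [heq] at hstep'
    linarith
  refine ⟨hmono, ?_⟩
  exact ⟨_, tendsto_atTop_ciSup hmono ⟨C, fun x ⟨t, ht⟩ => ht ▸ hC t⟩⟩
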